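/- Let s ∈ (0,1/2) and let f : ℝ → ℂ be measurable. Define V : ℝ → ℂ by V(t) := f(t) for t > 0, V(0) := 0, and V(t) := f(−t) for t < 0. Then [V]²_{s,ℝ} ≤ 4·[f]²_{s,(0,∞)} (as an inequality in [0,∞]). -/

import Mathlib

/-!
Off the origin the even extension satisfies `V t = f |t|`, and `||x| - |y|| ≤ |x - y|`, so on
each of the four open quadrants of `ℝ²` the integrand of `[V]²` is dominated by that of `[f]²`
at `(|x|, |y|)`; reflecting the quadrants onto `(0,∞)²` gives four copies of `[f]²_{s,(0,∞)}`.
-/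

open MeasureTheory
open scoped ENNReal NNReal

/-- The squared Slobodeckij (Gagliardo) seminorm
`[g]²_{s,A} = ∫_A ∫_A |g(x) − g(y)|² / |x − y|^{1+2s} dx dy`, valued in `[0,∞]`. -/
noncomputable def slobSq (s : ℝ) (A : Set ℝ) (g : ℝ → ℂ) : ℝ≥0∞ :=
  ∫⁻ x in A, ∫⁻ y in A,
    (‖g x - g y‖₊ : ℝ≥0∞) ^ 2 / ENNReal.ofReal (|x - y| ^ (1 + 2 * s))

open Set

theorem lintegral_eq_setLIntegral_Ioi_add_comp_neg (h : ℝ → ℝ≥0∞) :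
    ∫⁻ x, h x = (∫⁻ x in Ioi 0, h x) + ∫⁻ x in Ioi 0, h (-x) := by
  have hneg : ∫⁻ x in Ioi 0, h (-x) = ∫⁻ x in Iio 0, h x := by
    simpa using (Measure.measurePreserving_neg (volume : Measure ℝ)).setLIntegral_comp_preimage_emb
      (Homeomorph.neg ℝ).measurableEmbedding h (Iio 0)
  rw [hneg, ← lintegral_union measurableSet_Iio Ioi_disjoint_Iio_same, union_comm,
    Iio_union_Ioi, restrict_compl_singleton]

theorem lintegral_le_two_mul_setLIntegral_Ioi {h c : ℝ → ℝ≥0∞}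
    (hpos : ∀ x > 0, h x ≤ c x) (hneg : ∀ x > 0, h (-x) ≤ c x) :
    ∫⁻ x, h x ≤ 2 * ∫⁻ x in Ioi 0, c x := by
  rw [lintegral_eq_setLIntegral_Ioi_add_comp_neg, two_mul]
  exact add_le_add (setLIntegral_mono' measurableSet_Ioi hpos)
    (setLIntegral_mono' measurableSet_Ioi hneg)

noncomputable def slobKernel (s : ℝ) (g : ℝ → ℂ) (x y : ℝ) : ℝ≥0∞ :=
  (‖g x - g y‖₊ : ℝ≥0∞) ^ 2 / ENNReal.ofReal (|x - y| ^ (1 + 2 * s))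

theorem slobKernel_le {s : ℝ} (hs : 0 ≤ 1 + 2 * s) {g h : ℝ → ℂ} {a b x y : ℝ}
    (ha : g a = h x) (hb : g b = h y) (hxy : |x - y| ≤ |a - b|) :
    slobKernel s g a b ≤ slobKernel s h x y := by
  unfold slobKernel
  rw [ha, hb]
  gcongr

theorem lintegral_slobKernel_le_of_even {s : ℝ} (hs : 0 ≤ 1 + 2 * s) {g f : ℝ → ℂ}
    (hg : ∀ t ≠ 0, g t = f |t|) {x : ℝ} (hx : x ≠ 0) :
    ∫⁻ y, slobKernel s g x y ≤ 2 * ∫⁻ y in Ioi 0, slobKernel s f |x| y := by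
  refine lintegral_le_two_mul_setLIntegral_Ioi (fun y hy => ?_) (fun y hy => ?_)
  · refine slobKernel_le hs (hg x hx) (by rw [hg y hy.ne', abs_of_pos hy]) ?_
    simpa [abs_of_pos hy] using abs_abs_sub_abs_le x y
  · refine slobKernel_le hs (hg x hx) (by rw [hg (-y) (neg_ne_zero.2 hy.ne'), abs_neg,
      abs_of_pos hy]) ?_
    simpa [abs_of_pos hy] using abs_abs_sub_abs_le x (-y)

theorem slobSq_univ_le_of_even {s : ℝ} (hs : 0 ≤ 1 + 2 * s) {g f : ℝ → ℂ}
    (hg : ∀ t ≠ 0, g t = f |t|) :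
    slobSq s univ g ≤ 4 * slobSq s (Ioi 0) f := by
  calc slobSq s univ g = ∫⁻ x, ∫⁻ y, slobKernel s g x y := by
        simp only [slobSq, Measure.restrict_univ]; rfl
    _ ≤ 2 * ∫⁻ x in Ioi 0, 2 * ∫⁻ y in Ioi 0, slobKernel s f x y := by
        refine lintegral_le_two_mul_setLIntegral_Ioi (fun x hx => ?_) (fun x hx => ?_)
        · simpa [abs_of_pos hx] using lintegral_slobKernel_le_of_even hs hg hx.ne'
        · simpa [abs_of_pos hx] using lintegral_slobKernel_le_of_even hs hg (neg_ne_zero.2 hx.ne')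
    _ = 4 * slobSq s (Ioi 0) f := by
        rw [lintegral_const_mul' _ _ ENNReal.ofNat_ne_top, ← mul_assoc]
        congr 1
        norm_num

theorem stmt_15_general (s : ℝ) (hs : s ∈ Set.Ioo (0 : ℝ) (1/2)) (f : ℝ → ℂ) :
    slobSq s Set.univ (fun t => if 0 < t then f t else if t < 0 then f (-t) else 0) ≤
      4 * slobSq s (Set.Ioi 0) f := by
  refine slobSq_univ_le_of_even (by linarith [hs.1]) fun t ht => ?_
  rcases ht.lt_or_gt with ht | ht
  · simp [ht, ht.not_gt, abs_of_neg ht]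
  · simp [ht, abs_of_pos ht]

theorem stmt_15 (s : ℝ) (hs : s ∈ Set.Ioo (0 : ℝ) (1/2)) (f : ℝ → ℂ) (hf : Measurable f) :
    slobSq s Set.univ (fun t => if 0 < t then f t else if t < 0 then f (-t) else 0) ≤
      4 * slobSq s (Set.Ioi 0) f :=
  stmt_15_general s hs f
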